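/- arXiv:1706.04787 — 5 statements merged into one kernel-verified Lean document; each statement's English description precedes it below -/
import Mathlib

section
/- Let G be a finite group, p a prime, k a nonnegative integer, and a \in ZG. For each conjugacy class C of G, the sum over all conjugacy classes D with D^{p^k} = C of \varepsilon_D(a) is congruent modulo p to \varepsilon_C(a^{p^k}). Here D^{p^k} = C means x^{p^k} \in C for (all) x \in D. -/
open Finset MonoidAlgebra
open scoped Classical

noncomputable section

variable {G : Type*} [Group G] [Fintype G]

/-- Partial augmentation of `a ∈ ℤG` at the conjugacy class `C`. -/
def paC (a : MonoidAlgebra ℤ G) (C : ConjClasses G) : ℤ :=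
  ∑ x ∈ Finset.univ.filter (fun x => ConjClasses.mk x = C), a.coeff x

/-!
Expand `a ^ p ^ k = (∑ a_g g) ^ p ^ k` as a sum over words of length `p ^ k`. The cyclic group
of order `p ^ k` acts on the words by rotation, and since `ε_C(xy) = ε_C(yx)` the value of `ε_C`
on a word is constant along orbits. Non-constant words lie in orbits of size divisible by `p`,
so modulo `p` only the constant words `g ⋯ g` survive; they contribute `a_g ^ p ^ k ≡ a_g` at
`g ^ p ^ k`.
-/

open MulAction in
theorem IsPGroup.sum_eq_sum_fixedPoints {p : ℕ} [Fact p.Prime] {H α M : Type*} [Group H]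
    [MulAction H α] [Fintype α] [AddCommMonoid M] [Module (ZMod p) M] (hH : IsPGroup p H)
    (F : α → M) (hF : ∀ (h : H) (x : α), F (h • x) = F x) :
    ∑ x, F x = ∑ x with x ∈ fixedPoints H α, F x := by
  rw [← sum_filter_add_sum_filter_not univ (· ∈ fixedPoints H α),
    sum_cancels_of_partition_cancels (s := {x | x ∉ fixedPoints H α}) (orbitRel H α) ?_,
    add_zero]
  intro x hx
  have hx : x ∉ fixedPoints H α := (mem_filter.mp hx).2
  have orbit_eq :
      ({a | a ∉ fixedPoints H α ∧ orbitRel H α a x} : Finset α) = (orbit H x).toFinset := by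
    ext a
    simp only [mem_filter_univ, Set.mem_toFinset, orbitRel_apply, and_iff_right_iff_imp]
    intro ha hfix
    rw [← orbit_eq_iff] at ha
    rw [← subsingleton_orbit_iff_mem_fixedPoints, ha,
      subsingleton_orbit_iff_mem_fixedPoints] at hfix
    exact hx hfix
  obtain ⟨n, hn⟩ := hH.card_orbit x
  have hn0 : n ≠ 0 := by
    rintro rfl
    rw [pow_zero, Nat.card_eq_fintype_card, ← mem_fixedPoints_iff_card_orbit_eq_one] at hn
    exact hx hn
  have F_orbit : ∀ a ∈ (orbit H x).toFinset, F a = F x := by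
    intro a ha
    obtain ⟨h, rfl⟩ := Set.mem_toFinset.mp ha
    exact hF h x
  rw [filter_filter, orbit_eq, sum_congr rfl F_orbit, sum_const, Set.toFinset_card,
    ← Nat.card_eq_fintype_card, hn, ← Nat.cast_smul_eq_nsmul (ZMod p), Nat.cast_pow,
    ZMod.natCast_self, zero_pow hn0, zero_smul]

theorem List.apply_prod_rotate {A β : Type*} [Monoid A] {τ : A → β}
    (hτ : ∀ x y, τ (x * y) = τ (y * x)) (l : List A) (n : ℕ) :
    τ (l.rotate n).prod = τ l.prod := by
  rw [rotate_eq_drop_append_take_mod, prod_append, hτ, ← prod_append, take_append_drop]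

theorem List.ofFn_add_eq_rotate {α : Type*} {n : ℕ} (f : Fin n → α) (c : Fin n) :
    List.ofFn (fun j => f (c + j)) = (List.ofFn f).rotate c := by
  refine List.ext_getElem (by simp) fun j h₁ h₂ => ?_
  simp only [List.getElem_ofFn, List.getElem_rotate, List.length_ofFn]
  congr 1
  ext
  simp [Fin.val_add, add_comm]

theorem Fintype.sum_pow_eq_sum_list_prod_ofFn {ι A : Type*} [Fintype ι] [Semiring A]
    (x : ι → A) (n : ℕ) :
    (∑ i, x i) ^ n = ∑ f : Fin n → ι, (List.ofFn fun j => x (f j)).prod := by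
  induction n with
  | zero => simp
  | succ n ih =>
    rw [pow_succ', ih, sum_mul_sum, ← (Fin.consEquiv fun _ => ι).sum_comp,
      Fintype.sum_prod_type]
    simp [List.ofFn_succ]

attribute [local instance] arrowAction in
open MulAction in
theorem map_sum_pow_prime_pow {p : ℕ} [hp : Fact p.Prime] {ι A M : Type*} [Fintype ι]
    [Semiring A] [AddCommMonoid M] [Module (ZMod p) M] (τ : A →+ M)
    (hτ : ∀ x y, τ (x * y) = τ (y * x)) (x : ι → A) (k : ℕ) :
    τ ((∑ i, x i) ^ p ^ k) = ∑ i, τ (x i ^ p ^ k) := by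
  have : NeZero (p ^ k) := ⟨pow_ne_zero k hp.out.ne_zero⟩
  have hH : IsPGroup p (Multiplicative (Fin (p ^ k))) := IsPGroup.of_card (n := k) (by simp)
  have smul_apply (c : Multiplicative (Fin (p ^ k))) (f : Fin (p ^ k) → ι) :
      c • f = fun j => f (Multiplicative.toAdd c⁻¹ + j) := rfl
  rw [Fintype.sum_pow_eq_sum_list_prod_ofFn, map_sum,
    hH.sum_eq_sum_fixedPoints (α := Fin (p ^ k) → ι) _ fun c f => by
      rw [smul_apply, List.ofFn_add_eq_rotate (fun j => x (f j)), List.apply_prod_rotate hτ]]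
  symm
  refine sum_nbij' (fun i _ => i) (fun f => f 0) (fun i _ => ?_) (by simp) (by simp)
    (fun f hf => ?_) (by simp [List.ofFn_const])
  · simp [mem_fixedPoints, smul_apply]
  · ext j
    have := congrFun ((mem_fixedPoints.mp (mem_filter.mp hf).2) (Multiplicative.ofAdd (-j))) 0
    simpa [smul_apply] using this.symm

theorem MonoidAlgebra.sum_univ_single_coeff {R M : Type*} [Semiring R] [Fintype M]
    (a : MonoidAlgebra R M) : ∑ x, single x (a.coeff x) = a := by
  conv_rhs => rw [← a.sum_coeff_single, Finsupp.sum_fintype _ _ fun _ => single_zero _]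

theorem ConjClasses.mk_mul_comm {α : Type*} [Group α] (g h : α) :
    ConjClasses.mk (g * h) = ConjClasses.mk (h * g) :=
  ConjClasses.mk_eq_mk_iff_isConj.mpr (isConj_iff.mpr ⟨h, by group⟩)

@[simps]
def paCHom (C : ConjClasses G) : MonoidAlgebra ℤ G →+ ℤ where
  toFun a := paC a C
  map_zero' := by simp [paC]
  map_add' a b := by simp [paC, sum_add_distrib]

theorem paC_single (x : G) (r : ℤ) (C : ConjClasses G) :
    paC (single x r) C = if ConjClasses.mk x = C then r else 0 := by
  simp [paC, coeff_single, Finsupp.single_apply]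

theorem paC_mul_comm (a b : MonoidAlgebra ℤ G) (C : ConjClasses G) :
    paC (a * b) C = paC (b * a) C := by
  have expand (a b : MonoidAlgebra ℤ G) : paC (a * b) C =
      ∑ g, ∑ h, if ConjClasses.mk (g * h) = C then a.coeff g * b.coeff h else 0 := by
    rw [← a.sum_univ_single_coeff, ← b.sum_univ_single_coeff, sum_mul_sum]
    change paCHom C _ = _
    simp [map_sum, single_mul_single, paC_single]
  rw [expand, expand, sum_comm]
  simp only [ConjClasses.mk_mul_comm, mul_comm]

theorem sum_ite_paC_eq_sum_ite_coeff (a : MonoidAlgebra ℤ G) (C : ConjClasses G) (n : ℕ) :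
    (∑ D : ConjClasses G,
        if ∃ x : G, ConjClasses.mk x = D ∧ ConjClasses.mk (x ^ n) = C then paC a D else 0) =
      ∑ g, if ConjClasses.mk (g ^ n) = C then a.coeff g else 0 := by
  rw [← sum_fiberwise univ ConjClasses.mk
    fun g => if ConjClasses.mk (g ^ n) = C then a.coeff g else 0]
  refine sum_congr rfl fun D _ => ?_
  split_ifs with hD
  · obtain ⟨x, rfl, hx⟩ := hD
    refine sum_congr rfl fun g hg => (if_pos ?_).symm
    rw [← hx, ConjClasses.mk_eq_mk_iff_isConj]
    exact (ConjClasses.mk_eq_mk_iff_isConj.mp (mem_filter.mp hg).2).pow n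
  · exact (sum_eq_zero fun g hg => if_neg fun hg' => hD ⟨g, (mem_filter.mp hg).2, hg'⟩).symm

/-- Folklore congruence: `∑_{D^{p^k} = C} ε_D(a) ≡ ε_C(a^{p^k}) mod p`. -/
theorem folklore_congruence (p : ℕ) (hp : p.Prime) (k : ℕ)
    (a : MonoidAlgebra ℤ G) (C : ConjClasses G) :
    (∑ D : ConjClasses G,
        if ∃ x : G, ConjClasses.mk x = D ∧ ConjClasses.mk (x ^ p ^ k) = C
        then paC a D else 0)
      ≡ paC (a ^ p ^ k) C [ZMOD (p : ℤ)] := by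
  have : Fact p.Prime := ⟨hp⟩
  let τ := (Int.castAddHom (ZMod p)).comp (paCHom C)
  have hτ (x y : MonoidAlgebra ℤ G) : τ (x * y) = τ (y * x) := by simp [τ, paC_mul_comm]
  have τ_single_pow (g : G) : τ (single g (a.coeff g) ^ p ^ k) =
      if ConjClasses.mk (g ^ p ^ k) = C then (a.coeff g : ZMod p) else 0 := by
    simp [τ, paC_single, ZMod.pow_card_pow]
  rw [sum_ite_paC_eq_sum_ite_coeff, ← ZMod.intCast_eq_intCast_iff]
  calc _ = ∑ g, τ (single g (a.coeff g) ^ p ^ k) := by push_cast [τ_single_pow]; rfl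
    _ = τ ((∑ g, single g (a.coeff g)) ^ p ^ k) := (map_sum_pow_prime_pow τ hτ _ k).symm
    _ = _ := by rw [a.sum_univ_single_coeff]; rfl

end
end

section
/- Let G be a finite abelian group, p a prime, and a \in ZG. Then for every g \in G, the sum of coefficients a_h over all h \in G with h^p = g is congruent modulo p to the coefficient of a^p at g. -/
open Finset MonoidAlgebra
open scoped Classical

noncomputable section

/-- Frobenius-type congruence for coefficients in an abelian group ring:
`∑_{h^p = g} a_h ≡ (a^p)_g mod p`. -/
theorem frobenius_coeff_congruence {G : Type*} [CommGroup G] [Fintype G]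
    (p : ℕ) (hp : p.Prime) (a : MonoidAlgebra ℤ G) (g : G) :
    (∑ h ∈ Finset.univ.filter (fun h : G => h ^ p = g), a.coeff h)
      ≡ (a ^ p).coeff g [ZMOD (p : ℤ)] := by
  haveI : Fact p.Prime := ⟨hp⟩
  rw [← ZMod.intCast_eq_intCast_iff]
  haveI : CharP (MonoidAlgebra (ZMod p) G) p := by
    rw [CharP.charP_iff_prime_eq_zero hp,
      ← map_natCast (singleOneRingHom : ZMod p →+* MonoidAlgebra (ZMod p) G) p,
      ZMod.natCast_self, map_zero]
  let φ : MonoidAlgebra ℤ G →+* MonoidAlgebra (ZMod p) G :=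
    liftNCRingHom (Int.castRingHom (MonoidAlgebra (ZMod p) G)) (of (ZMod p) G)
      (fun x y => Commute.all _ _)
  have hsingle : ∀ (h : G) (c : ℤ), φ (single h c) = single h ((c : ℤ) : ZMod p) := by
    intro h c
    have h1 : ((c : ℤ) : MonoidAlgebra (ZMod p) G) = single (1 : G) ((c : ℤ) : ZMod p) := by
      rw [← map_intCast (singleOneRingHom : ZMod p →+* MonoidAlgebra (ZMod p) G) c]
      rfl
    have h3 : φ (single h c) =
        (Int.castRingHom (MonoidAlgebra (ZMod p) G)) c * (of (ZMod p) G) h :=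
      liftNC_single _ _ _ _
    rw [h3, eq_intCast, of_apply, h1, single_mul_single, one_mul, mul_one]
  have hφ : ∀ (b : MonoidAlgebra ℤ G) (x : G), (φ b).coeff x = ((b.coeff x : ℤ) : ZMod p) := by
    intro b
    induction b using MonoidAlgebra.induction_linear with
    | zero => simp
    | add f g hf hg =>
      intro x
      rw [map_add, coeff_add, coeff_add, Finsupp.add_apply, Finsupp.add_apply, hf, hg, Int.cast_add]
    | single h c =>
      intro x
      rw [hsingle]
      simp only [coeff_single, Finsupp.single_apply]
      split <;> simp
  have ha : φ a = ∑ h : G, single h ((a.coeff h : ℤ) : ZMod p) := by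
    apply coeff_injective
    apply Finsupp.ext
    intro x
    rw [hφ, coeff_sum, Finset.sum_apply']
    simp [Finsupp.single_apply]
  have key : φ (a ^ p) = ∑ h : G, single (h ^ p) ((a.coeff h : ℤ) : ZMod p) := by
    rw [map_pow, ha, sum_pow_char]
    refine Finset.sum_congr rfl fun h _ => ?_
    rw [single_pow, ZMod.pow_card]
  have h2 : (((a ^ p).coeff g : ℤ) : ZMod p) = (φ (a ^ p)).coeff g := (hφ _ _).symm
  rw [h2, key, coeff_sum, Finset.sum_apply', Int.cast_sum, Finset.sum_filter]
  refine Finset.sum_congr rfl fun h _ => ?_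
  rw [coeff_single, Finsupp.single_apply]

end
end

section
/- Let G be a finite group and u a torsion element of V(ZG) satisfying the PAP Property (PAP(k) holds for all k). If u has order n > 1 then \varepsilon_{G[d]}(u) = 0 for every proper divisor d of n, where G[d] is the set of elements of G of order d. (Uses the Berman–Higman theorem \varepsilon_{\{1\}}(u^m) = 0 for u^m \ne 1, assumed as hypothesis.) -/
open Finset MonoidAlgebra
open scoped Classical

noncomputable section

variable {G : Type*} [Group G] [Fintype G]

/-- Partial sum of coefficients of `a ∈ ℤG` over a subset `X` of `G`. -/
def pa (a : MonoidAlgebra ℤ G) (X : Finset G) : ℤ := ∑ x ∈ X, a.coeff x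

/-- The condition PAP(k) for a unit `u` of `ℤG`. -/
def PAP (u : (MonoidAlgebra ℤ G)ˣ) (k : ℤ) : Prop :=
  ∀ C : ConjClasses G,
    paC (↑(u ^ k)) C =
      ∑ D : ConjClasses G,
        if ∃ x : G, ConjClasses.mk x = D ∧ ConjClasses.mk (x ^ k) = C
        then paC (↑u) D else 0

/-!
For `d` with `u ^ d ≠ 1`, Berman–Higman kills the coefficient of `u ^ d` at `1`, and PAP(d) at
the class of `1` rewrites that coefficient as the sum of the coefficients of `u` on the elements
`x` with `x ^ d = 1`, i.e. as `∑_{e ∣ d} ε_{G[e]}(u)`. Such `d` form a divisor-closed set, so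
induction on `d` gives `ε_{G[d]}(u) = 0` for all of them, in particular for the proper divisors
of `n = o(u)`.
-/

theorem Nat.eq_zero_of_sum_divisors_eq_zero {M : Type*} [AddCommMonoid M] {P : ℕ → Prop}
    (f : ℕ → M) (hP : ∀ {d e : ℕ}, e ∣ d → P d → P e)
    (hsum : ∀ d, d ≠ 0 → P d → ∑ e ∈ d.divisors, f e = 0) :
    ∀ d, d ≠ 0 → P d → f d = 0 := by
  intro d
  induction d using Nat.strong_induction_on with
  | _ d ih =>
    intro hd hPd
    have hproper : ∑ e ∈ d.properDivisors, f e = 0 := by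
      refine Finset.sum_eq_zero fun e he => ?_
      obtain ⟨hed, hlt⟩ := Nat.mem_properDivisors.mp he
      exact ih e hlt (ne_zero_of_dvd_ne_zero hd hed) (hP hed hPd)
    have hd_sum := hsum d hd hPd
    rwa [← Nat.cons_self_properDivisors hd, sum_cons, hproper, add_zero] at hd_sum

theorem paC_one (a : MonoidAlgebra ℤ G) : paC a (ConjClasses.mk 1) = a.coeff 1 := by
  have hclass : univ.filter (fun x : G => ConjClasses.mk x = ConjClasses.mk 1) = {1} := by
    ext x
    simp [ConjClasses.mk_eq_mk_iff_isConj]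
  rw [paC, hclass, sum_singleton]

theorem sum_ite_paC_eq_sum_filter (a : MonoidAlgebra ℤ G) (p : G → Prop)
    (hp : ∀ {x y : G}, IsConj x y → p x → p y) :
    ∑ D : ConjClasses G, (if ∃ x, ConjClasses.mk x = D ∧ p x then paC a D else 0) =
      ∑ x ∈ univ.filter p, a.coeff x := by
  rw [sum_filter, ← sum_fiberwise univ (fun x : G => ConjClasses.mk x)]
  refine sum_congr rfl fun D _ => ?_
  split_ifs with hD
  · obtain ⟨y, rfl, hy⟩ := hD
    refine sum_congr rfl fun x hx => ?_
    have hyx : IsConj y x := ConjClasses.mk_eq_mk_iff_isConj.mp (mem_filter.mp hx).2.symm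
    rw [if_pos (hp hyx hy)]
  · exact (sum_eq_zero fun x hx => if_neg fun hpx => hD ⟨x, (mem_filter.mp hx).2, hpx⟩).symm

theorem PAP.coeff_one_eq_sum {u : (MonoidAlgebra ℤ G)ˣ} {k : ℤ} (h : PAP u k) :
    (↑(u ^ k) : MonoidAlgebra ℤ G).coeff 1 =
      ∑ x ∈ univ.filter (fun x : G => x ^ k = 1), (↑u : MonoidAlgebra ℤ G).coeff x := by
  have hPAP := h (ConjClasses.mk 1)
  simp only [paC_one, ConjClasses.mk_eq_mk_iff_isConj, isConj_one_left] at hPAP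
  rw [hPAP, sum_ite_paC_eq_sum_filter]
  intro x y hxy hx
  obtain ⟨c, rfl⟩ := isConj_iff.mp hxy
  rw [conj_zpow, hx, mul_one, mul_inv_cancel]

theorem sum_filter_pow_eq_one_eq_sum_divisors (a : MonoidAlgebra ℤ G) {d : ℕ} (hd : d ≠ 0) :
    ∑ x ∈ univ.filter (fun x : G => x ^ d = 1), a.coeff x =
      ∑ e ∈ d.divisors, pa a (univ.filter (fun g : G => orderOf g = e)) := by
  rw [← sum_fiberwise_of_maps_to (t := d.divisors) (g := orderOf)
    fun x hx => Nat.mem_divisors.mpr ⟨orderOf_dvd_of_pow_eq_one (mem_filter.mp hx).2, hd⟩]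
  refine sum_congr rfl fun e he => ?_
  rw [pa, filter_filter]
  congr 1
  ext x
  simp only [mem_filter, mem_univ, true_and, and_iff_right_iff_imp]
  rintro rfl
  exact orderOf_dvd_iff_pow_eq_one.mp (Nat.mem_divisors.mp he).1

theorem pa_elements_of_order_proper_divisor_eq_zero_general
    (u : (MonoidAlgebra ℤ G)ˣ) (n : ℕ) (hord : orderOf u = n)
    (hPAP : ∀ k : ℤ, PAP u k)
    (hBH : ∀ m : ℤ, u ^ m ≠ 1 → (↑(u ^ m) : MonoidAlgebra ℤ G).coeff 1 = 0) :
    ∀ d : ℕ, d ∣ n → d ≠ n →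
      pa (↑u) (Finset.univ.filter (fun g : G => orderOf g = d)) = 0 := by
  have hsum : ∀ d : ℕ, d ≠ 0 → u ^ d ≠ 1 →
      ∑ e ∈ d.divisors, pa (↑u) (univ.filter (fun g : G => orderOf g = e)) = 0 := by
    intro d hd hud
    have hcoeff := (hPAP d).coeff_one_eq_sum
    simp only [zpow_natCast] at hcoeff
    rw [← sum_filter_pow_eq_one_eq_sum_divisors _ hd, ← hcoeff]
    simpa only [zpow_natCast] using hBH d (by rwa [zpow_natCast])
  have hclosed : ∀ {d e : ℕ}, e ∣ d → u ^ d ≠ 1 → u ^ e ≠ 1 := by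
    rintro _ e ⟨m, rfl⟩ hud hue
    exact hud (by rw [pow_mul, hue, one_pow])
  intro d hdn hne
  have hud : u ^ d ≠ 1 := fun h =>
    hne (Nat.dvd_antisymm hdn (hord ▸ orderOf_dvd_of_pow_eq_one h))
  exact Nat.eq_zero_of_sum_divisors_eq_zero _ hclosed hsum d
    (by rintro rfl; exact hud (pow_zero u)) hud

/-- If `u ∈ V(ℤG)` has order `n > 1` and satisfies the PAP Property, then (using
Berman–Higman for the powers of `u`) `ε_{G[d]}(u) = 0` for every proper divisor `d`
of `n`. -/
theorem pa_elements_of_order_proper_divisor_eq_zero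
    (u : (MonoidAlgebra ℤ G)ˣ) (n : ℕ) (hn : 1 < n) (hord : orderOf u = n)
    (haug : ∑ x : G, (↑u : MonoidAlgebra ℤ G).coeff x = 1)
    (hPAP : ∀ k : ℤ, PAP u k)
    (hBH : ∀ m : ℤ, u ^ m ≠ 1 → (↑(u ^ m) : MonoidAlgebra ℤ G).coeff 1 = 0) :
    ∀ d : ℕ, d ∣ n → d ≠ n →
      pa (↑u) (Finset.univ.filter (fun g : G => orderOf g = d)) = 0 :=
  pa_elements_of_order_proper_divisor_eq_zero_general u n hord hPAP hBH

end
end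

section
/- Let G be a finite cyclic group of order m with gcd(m, 6) = 1 and generator g. Then u = 1 - g + g^2 is a unit of ZG of augmentation 1, and u does not satisfy PAP(2): there exists an element c of G with \varepsilon_{\{c\}}(u^2) \ne \sum_{d : d^2 = c} \varepsilon_{\{d\}}(u). -/
open Finset MonoidAlgebra
open scoped Classical

/-! `u = 1 - g + g²` is the sixth cyclotomic polynomial evaluated at `g`. Modulo `u` we have
`g³ = -1`, so `g⁶ = 1`; together with `gᵐ = 1` and `gcd(m, 6) = 1` this forces `g = 1` modulo `u`,
hence `0 = u = 1` there and `u` is a unit. `PAP(2)` fails at `c = g²`: the group has odd order,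
so `g` is the only square root of `g²`, where `u` has coefficient `-1`, whereas
`u² = 1 - 2g + 3g² - 2g³ + g⁴` has coefficient `3` at `g²`. -/

lemma isUnit_sq_sub_self_add_one_of_pow_eq_one {R : Type*} [CommRing R] {a : R} {n : ℕ}
    (ha : a ^ n = 1) (hn : n.Coprime 6) : IsUnit (a ^ 2 - a + 1) := by
  rw [← Ideal.span_singleton_eq_top, ← Ideal.Quotient.zero_eq_one_iff]
  set x := Ideal.Quotient.mk (Ideal.span {a ^ 2 - a + 1}) a with hx_def
  have hx : x ^ 2 - x + 1 = 0 := by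
    rw [hx_def, ← map_pow, ← map_sub, ← map_one (Ideal.Quotient.mk _), ← map_add]
    exact Ideal.Quotient.mk_singleton_self _
  have hx6 : x ^ 6 = 1 := by linear_combination (x ^ 4 + x ^ 3 - x - 1) * hx
  have hxn : x ^ n = 1 := by rw [hx_def, ← map_pow, ha, map_one]
  rw [(pow_eq_one_iff_of_coprime hn).1 ⟨hxn, hx6⟩] at hx
  linear_combination -hx

lemma filter_sq_eq_sq_eq_singleton {G : Type*} [Group G] [Fintype G]
    (h : (Nat.card G).Coprime 2) (c : G) : univ.filter (fun d : G => d ^ 2 = c ^ 2) = {c} := by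
  ext d
  simp [h.pow_left_bijective.injective.eq_iff]

section OneSubOfAddOfSq

variable {R G : Type*} [CommRing R]

lemma isUnit_one_sub_of_add_of_sq [CommMonoid G] {g : G} {n : ℕ} (hg : g ^ n = 1)
    (hn : n.Coprime 6) : IsUnit (1 - of R G g + of R G (g ^ 2)) := by
  have hgn : of R G g ^ n = 1 := by rw [← map_pow, hg, map_one]
  convert isUnit_sq_sub_self_add_one_of_pow_eq_one hgn hn using 1
  rw [map_pow]
  ring

lemma sum_coeff_one_sub_of_add_of_sq [Monoid G] [Fintype G] (g : G) :
    ∑ x, (1 - of R G g + of R G (g ^ 2)).coeff x = 1 := by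
  rw [← map_one (of R G)]
  simp [coeff_add, coeff_sub, sum_add_distrib, sum_sub_distrib]

lemma coeff_one_sub_of_add_of_sq_self [Group G] {g : G} (hg : g ≠ 1) :
    (1 - of R G g + of R G (g ^ 2)).coeff g = -1 := by
  have hg2 : g ^ 2 ≠ g := by simpa [pow_two] using hg
  rw [← map_one (of R G)]
  simp [coeff_add, coeff_sub, hg, hg2]

lemma coeff_sq_one_sub_of_add_of_sq [Group G] {g : G} (hg : g ≠ 1) (hg2 : g ^ 2 ≠ 1) :
    ((1 - of R G g + of R G (g ^ 2)) ^ 2).coeff (g ^ 2) = 3 := by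
  have hexpand : (1 - of R G g + of R G (g ^ 2)) ^ 2 = of R G 1 - of R G g - of R G g
      + of R G (g ^ 2) + of R G (g ^ 2) + of R G (g ^ 2) - of R G (g ^ 3) - of R G (g ^ 3)
      + of R G (g ^ 4) := by
    simp only [map_pow, map_one]
    noncomm_ring
  have h1 : g ≠ g ^ 2 := by simpa [pow_two, eq_comm] using hg
  have h3 : g ^ 3 ≠ g ^ 2 := by simpa [pow_succ] using hg
  have h4 : g ^ 4 ≠ g ^ 2 := by simpa [pow_succ, mul_assoc] using hg2
  rw [hexpand]
  norm_num [coeff_add, coeff_sub, hg2, h1, h3, h4]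

end OneSubOfAddOfSq

/-- In a cyclic group `G = ⟨g⟩` of order `m` coprime to `6`, the element
`u = 1 - g + g²` is an augmentation-one unit of `ℤG` which fails `PAP(2)`:
for some `c ∈ G` the coefficient of `u²` at `c` differs from the sum of the
coefficients of `u` at the square roots of `c`. -/
theorem unit_one_sub_g_add_gsq_not_PAP2 {G : Type*} [CommGroup G] [Fintype G]
    (m : ℕ) (hm : Fintype.card G = m) (hm1 : 1 < m) (hcop : Nat.Coprime m 6)
    (g : G) (hg : ∀ x : G, x ∈ Subgroup.zpowers g) :
    letI u : MonoidAlgebra ℤ G :=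
      1 - MonoidAlgebra.of ℤ G g + MonoidAlgebra.of ℤ G (g ^ 2)
    IsUnit u ∧ (∑ x : G, u.coeff x) = 1 ∧
      ∃ c : G, (u ^ 2).coeff c ≠ ∑ d ∈ Finset.univ.filter (fun d : G => d ^ 2 = c), u.coeff d := by
  have hcard : Nat.card G = m := Nat.card_eq_fintype_card.trans hm
  have hodd : (Nat.card G).Coprime 2 := hcard ▸ hcop.coprime_dvd_right (by norm_num)
  have hg1 : g ≠ 1 := by
    rintro rfl
    have := orderOf_eq_card_of_forall_mem_zpowers hg
    rw [orderOf_one, hcard] at this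
    omega
  have hg2 : g ^ 2 ≠ 1 := fun h => hg1 (hodd.pow_left_bijective.injective (h.trans (one_pow 2).symm))
  refine ⟨isUnit_one_sub_of_add_of_sq (hm ▸ pow_card_eq_one) hcop,
    sum_coeff_one_sub_of_add_of_sq g, g ^ 2, ?_⟩
  rw [filter_sq_eq_sq_eq_singleton hodd, sum_singleton, coeff_sq_one_sub_of_add_of_sq hg1 hg2,
    coeff_one_sub_of_add_of_sq_self hg1]
  norm_num
end

section
/- Let G be a finite cyclic group of order m coprime to 6 with generator g. Then 1 - g + g^2 is invertible in ZG. -/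
/-!
Put `x = -g`, so that `1 - g + g² = 1 + x + x²`. Since `m` is odd, `x ^ m = -1`, hence
`∑_{i < 2m} x ^ i = (∑_{i < m} x ^ i) (1 + x ^ m) = 0` and `x ^ (2m) = 1`; so a partial sum
`∑_{i < n} x ^ i` with `n ≡ 1 (mod 2m)` equals `1`. As `gcd(3, 2m) = 1` there is `k` with
`3k ≡ 1 (mod 2m)`, and `(1 + x + x²) ∑_{j < k} x ^ (3j) = ∑_{l < 3k} x ^ l = 1`.
-/

open Finset MonoidAlgebra

theorem geom_sum_mul_geom_sum_pow {R : Type*} [CommSemiring R] (x : R) (n k : ℕ) :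
    (∑ i ∈ range n, x ^ i) * ∑ j ∈ range k, (x ^ n) ^ j = ∑ l ∈ range (n * k), x ^ l := by
  induction k with
  | zero => simp
  | succ k ih =>
    rw [sum_range_succ, mul_add, ih, Nat.mul_succ, sum_range_add, sum_mul]
    congr 1
    refine sum_congr rfl fun i _ => ?_
    rw [← pow_mul, ← pow_add, add_comm]

section GeomSumEqZero

variable {R : Type*} [CommRing R] {x : R} {N : ℕ}

theorem pow_eq_one_of_geom_sum_eq_zero (hx : ∑ i ∈ range N, x ^ i = 0) : x ^ N = 1 := by
  rw [← sub_eq_zero, ← geom_sum_mul, hx, zero_mul]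

theorem geom_sum_mul_add_one_eq_one_of_geom_sum_eq_zero (hx : ∑ i ∈ range N, x ^ i = 0)
    (q : ℕ) : ∑ i ∈ range (N * q + 1), x ^ i = 1 := by
  rw [sum_range_succ, ← geom_sum_mul_geom_sum_pow, hx, zero_mul, zero_add, pow_mul,
    pow_eq_one_of_geom_sum_eq_zero hx, one_pow]

theorem isUnit_geom_sum_of_geom_sum_eq_zero (hx : ∑ i ∈ range N, x ^ i = 0) {k : ℕ}
    (hk : k.Coprime N) (hN : 1 < N) : IsUnit (∑ i ∈ range k, x ^ i) := by
  obtain ⟨j, -, hj⟩ := Nat.exists_mul_mod_eq_one_of_coprime hk hN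
  refine IsUnit.of_mul_eq_one (∑ i ∈ range j, (x ^ k) ^ i) ?_
  rw [geom_sum_mul_geom_sum_pow, ← Nat.div_add_mod (k * j) N, hj,
    geom_sum_mul_add_one_eq_one_of_geom_sum_eq_zero hx]

end GeomSumEqZero

theorem geom_sum_eq_zero_of_pow_eq_neg_one {R : Type*} [CommRing R] {x : R} {n : ℕ}
    (hx : x ^ n = -1) : ∑ i ∈ range (n * 2), x ^ i = 0 := by
  rw [← geom_sum_mul_geom_sum_pow, geom_sum_two, hx, neg_add_cancel, mul_zero]

theorem isUnit_one_sub_g_add_gsq_general {G : Type*} [CommGroup G] [Fintype G]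
    (m : ℕ) (hm : Fintype.card G = m) (hcop : Nat.Coprime m 6)
    (g : G) :
    IsUnit ((1 : MonoidAlgebra ℤ G) - MonoidAlgebra.of ℤ G g
      + MonoidAlgebra.of ℤ G (g ^ 2)) := by
  have hm_odd : Odd m := (hcop.coprime_dvd_right (by norm_num : 2 ∣ 6)).odd_of_right
  have h3 : Nat.Coprime 3 (m * 2) :=
    (hcop.coprime_dvd_right (by norm_num : 3 ∣ 6)).symm.mul_right (by norm_num)
  have hgm : g ^ m = 1 := hm ▸ pow_card_eq_one
  have hx : (-of ℤ G g) ^ m = -1 := by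
    rw [neg_pow, ← map_pow, hgm, map_one, hm_odd.neg_one_pow, neg_one_mul]
  convert isUnit_geom_sum_of_geom_sum_eq_zero (geom_sum_eq_zero_of_pow_eq_neg_one hx) h3
    (by have := hm_odd.pos; omega) using 1
  simp only [sum_range_succ, range_zero, sum_empty, map_pow]
  ring

/-- In a cyclic group `G = ⟨g⟩` of order `m` coprime to `6`, the element
`1 - g + g²` (the sixth cyclotomic polynomial evaluated at `g`) is a unit of `ℤG`. -/
theorem isUnit_one_sub_g_add_gsq {G : Type*} [CommGroup G] [Fintype G]
    (m : ℕ) (hm : Fintype.card G = m) (hcop : Nat.Coprime m 6)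
    (g : G) (hg : ∀ x : G, x ∈ Subgroup.zpowers g) :
    IsUnit ((1 : MonoidAlgebra ℤ G) - MonoidAlgebra.of ℤ G g
      + MonoidAlgebra.of ℤ G (g ^ 2)) :=
  isUnit_one_sub_g_add_gsq_general m hm hcop g
end
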